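/- Let s, s' > 3/2. Then there exists C > 0 such that for every nonzero z in the closed upper half-plane with |z| ≥ 1 and every ψ ∈ L^{2,s}(ℝ): (i) ‖R₀(z)ψ‖_{−s'} ≤ C |z|^{−1/2} ‖ψ‖_s, and (ii) the integral operator R₀'(z) with kernel K₁(z; x, y) := exp(i z^{1/2}|x−y|) · ( (1/(4i)) z^{−3/2} − (|x−y|/4) z^{−1} ) (the z-derivative of the resolvent kernel) satisfies ‖R₀'(z)ψ‖_{−s'} ≤ C |z|^{−1} ‖ψ‖_s. -/

import Mathlib

open MeasureTheory Filter

/-- The weighted norm `‖ψ‖_s = (∫ (1+x²)^s |ψ(x)|² dx)^{1/2}`. -/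
noncomputable def wnorm (s : ℝ) (ψ : ℝ → ℂ) : ℝ :=
  (∫ x : ℝ, (1 + x ^ 2) ^ s * ‖ψ x‖ ^ 2) ^ ((1 : ℝ) / 2)

/-- Membership in the weighted space `L^{2,s}(ℝ)`. -/
def MemL2s (s : ℝ) (ψ : ℝ → ℂ) : Prop :=
  Measurable ψ ∧ Integrable (fun x : ℝ => (1 + x ^ 2) ^ s * ‖ψ x‖ ^ 2)

/-- The free resolvent `(R₀(z)ψ)(x) = −(1/(2i z^{1/2})) ∫ exp(i z^{1/2}|x−y|) ψ(y) dy`,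
with the principal square root `z^{1/2}`. -/
noncomputable def R0 (z : ℂ) (ψ : ℝ → ℂ) (x : ℝ) : ℂ :=
  -(1 / (2 * Complex.I * z ^ ((1 : ℂ) / 2))) *
    ∫ y : ℝ, Complex.exp (Complex.I * z ^ ((1 : ℂ) / 2) * ((|x - y| : ℝ) : ℂ)) * ψ y

/-- The `z`-derivative of the resolvent: the integral operator with kernel
`K₁(z; x, y) = exp(i z^{1/2}|x−y|) ((1/(4i)) z^{−3/2} − (|x−y|/4) z^{−1})`. -/
noncomputable def R0' (z : ℂ) (ψ : ℝ → ℂ) (x : ℝ) : ℂ :=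
  ∫ y : ℝ, Complex.exp (Complex.I * z ^ ((1 : ℂ) / 2) * ((|x - y| : ℝ) : ℂ)) *
      (1 / (4 * Complex.I) * z ^ (-(3 : ℂ) / 2) -
        ((|x - y| : ℝ) : ℂ) / 4 * z⁻¹) * ψ y

/-!
Both kernels are bounded by `c(z) (1 + x²)^t (1 + y²)^t`: for `R₀` with `t = 0` and
`c(z) = |z|^{-1/2}/2`, for `R₀'` with `t = 1/2` and `c(z) = |z|^{-1}/2`, using
`1 + |x - y| ≤ 2 (1 + x²)^{1/2} (1 + y²)^{1/2}` and `|z| ≥ 1`; the exponential has modulus at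
most one because `Im z^{1/2} ≥ 0` on the closed upper half-plane. By Cauchy–Schwarz in `y`, such a
kernel maps `L^{2,s}` into `L^{2,-s'}` with norm at most `c(z) ‖1‖_{2t-s} ‖1‖_{2t-s'}`, which is
finite when `2t - s < -1/2` and `2t - s' < -1/2`.
-/

open Complex in
lemma norm_exp_I_mul_cpow_half_mul_le_one {z : ℂ} (hz : 0 ≤ z.im) {r : ℝ} (hr : 0 ≤ r) :
    ‖exp (I * z ^ ((1 : ℂ) / 2) * r)‖ ≤ 1 := by
  have him : 0 ≤ (z ^ ((1 : ℂ) / 2)).im := by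
    rw [one_div, cpow_inv_two_im_eq_sqrt hz]
    exact Real.sqrt_nonneg _
  rw [norm_exp, Real.exp_le_one_iff]
  simpa [mul_re, mul_im] using mul_nonneg him hr

lemma one_add_abs_sub_le_two_mul (x y : ℝ) :
    1 + |x - y| ≤ 2 * ((1 + x ^ 2) ^ (1 / 2 : ℝ) * (1 + y ^ 2) ^ (1 / 2 : ℝ)) := by
  rw [← Real.sqrt_eq_rpow, ← Real.sqrt_eq_rpow, ← Real.sqrt_mul (by positivity)]
  have h2 : (2 : ℝ) = √(2 ^ 2) := (Real.sqrt_sq zero_le_two).symm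
  rw [h2, ← Real.sqrt_mul (by positivity)]
  apply Real.le_sqrt_of_sq_le
  nlinarith [sq_abs (x - y), abs_nonneg (x - y), sq_nonneg (x + y), sq_nonneg (x * y)]

lemma integrable_one_add_sq_rpow {t : ℝ} (ht : t < -(1 / 2)) :
    Integrable (fun x : ℝ => (1 + x ^ 2) ^ t) := by
  have h := integrable_rpow_neg_one_add_norm_sq (E := ℝ) (μ := volume) (r := -(2 * t))
    (by simp; linarith)
  convert h using 3 with x
  · simp
  · ring

lemma wnorm_nonneg (s : ℝ) (ψ : ℝ → ℂ) : 0 ≤ wnorm s ψ :=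
  Real.rpow_nonneg (integral_nonneg fun _ => by positivity) _

lemma wnorm_one (s : ℝ) : wnorm s 1 = (∫ x : ℝ, (1 + x ^ 2) ^ s) ^ ((1 : ℝ) / 2) := by
  simp [wnorm]

lemma one_add_sq_rpow_sq (x a : ℝ) : ((1 + x ^ 2) ^ a) ^ 2 = (1 + x ^ 2) ^ (2 * a) := by
  rw [← Real.rpow_mul_natCast (by positivity), mul_comm]
  norm_num

lemma integral_weight_mul_norm_le {s t : ℝ} (hts : 2 * t - s < -(1 / 2)) {ψ : ℝ → ℂ}
    (hψ : MemL2s s ψ) :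
    Integrable (fun y : ℝ => (1 + y ^ 2) ^ t * ‖ψ y‖) ∧
      ∫ y : ℝ, (1 + y ^ 2) ^ t * ‖ψ y‖ ≤ wnorm (2 * t - s) 1 * wnorm s ψ := by
  set f : ℝ → ℝ := fun y => (1 + y ^ 2) ^ (t - s / 2)
  set g : ℝ → ℝ := fun y => (1 + y ^ 2) ^ (s / 2) * ‖ψ y‖
  have hfg : (fun y : ℝ => (1 + y ^ 2) ^ t * ‖ψ y‖) = f * g := by
    ext y
    rw [Pi.mul_apply, ← mul_assoc, ← Real.rpow_add (by positivity)]
    ring_nf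
  have hf2 : ∀ y, f y ^ 2 = (1 + y ^ 2) ^ (2 * t - s) := fun y => by
    rw [one_add_sq_rpow_sq]; ring_nf
  have hg2 : ∀ y, g y ^ 2 = (1 + y ^ 2) ^ s * ‖ψ y‖ ^ 2 := fun y => by
    rw [mul_pow, one_add_sq_rpow_sq]; ring_nf
  have hf : MemLp f 2 := (memLp_two_iff_integrable_sq (by fun_prop)).2 <| by
    simpa only [hf2] using integrable_one_add_sq_rpow hts
  have hg_meas : Measurable g := (by fun_prop : Measurable fun y : ℝ => (1 + y ^ 2) ^ (s / 2)).mul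
    hψ.1.norm
  have hg : MemLp g 2 := (memLp_two_iff_integrable_sq hg_meas.aestronglyMeasurable).2 <| by
    simpa only [hg2] using hψ.2
  refine ⟨hfg ▸ hf.integrable_mul hg, ?_⟩
  have hCS := integral_mul_le_Lp_mul_Lq_of_nonneg (f := f) (g := g) Real.HolderConjugate.two_two
    (Eventually.of_forall fun y => Real.rpow_nonneg (by positivity) _)
    (Eventually.of_forall fun y => mul_nonneg (Real.rpow_nonneg (by positivity) _) (norm_nonneg _))
    (by rwa [ENNReal.ofReal_ofNat]) (by rwa [ENNReal.ofReal_ofNat])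
  simp only [Real.rpow_two, hf2, hg2] at hCS
  rw [hfg, wnorm_one, wnorm]
  exact hCS

lemma wnorm_le_of_norm_le {s t M : ℝ} (hts : 2 * t - s < -(1 / 2)) (hM : 0 ≤ M) {F : ℝ → ℂ}
    (hF : ∀ x, ‖F x‖ ≤ M * (1 + x ^ 2) ^ t) :
    wnorm (-s) F ≤ M * wnorm (2 * t - s) 1 := by
  have hpt : ∀ x : ℝ, (1 + x ^ 2) ^ (-s) * ‖F x‖ ^ 2 ≤ M ^ 2 * (1 + x ^ 2) ^ (2 * t - s) :=
    fun x => calc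
      (1 + x ^ 2) ^ (-s) * ‖F x‖ ^ 2 ≤ (1 + x ^ 2) ^ (-s) * (M * (1 + x ^ 2) ^ t) ^ 2 := by
        gcongr
        exact hF x
      _ = M ^ 2 * (1 + x ^ 2) ^ (2 * t - s) := by
        rw [mul_pow, one_add_sq_rpow_sq, sub_eq_neg_add, Real.rpow_add (by positivity)]
        ring
  calc wnorm (-s) F ≤ (∫ x : ℝ, M ^ 2 * (1 + x ^ 2) ^ (2 * t - s)) ^ ((1 : ℝ) / 2) := by
        refine Real.rpow_le_rpow (integral_nonneg fun _ => by positivity) ?_ (by norm_num)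
        exact integral_mono_of_nonneg (Eventually.of_forall fun _ => by positivity)
          ((integrable_one_add_sq_rpow hts).const_mul _) (Eventually.of_forall hpt)
    _ = M * wnorm (2 * t - s) 1 := by
        rw [integral_const_mul, Real.mul_rpow (by positivity)
          (integral_nonneg fun _ => by positivity), wnorm_one, ← Real.sqrt_eq_rpow,
          Real.sqrt_sq hM]

lemma wnorm_integral_le_of_norm_kernel_le {s s' t c : ℝ} (hts : 2 * t - s < -(1 / 2))
    (hts' : 2 * t - s' < -(1 / 2)) (hc : 0 ≤ c) {K : ℝ → ℝ → ℂ}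
    (hK : ∀ x y, ‖K x y‖ ≤ c * ((1 + x ^ 2) ^ t * (1 + y ^ 2) ^ t)) {ψ : ℝ → ℂ}
    (hψ : MemL2s s ψ) :
    wnorm (-s') (fun x => ∫ y, K x y * ψ y) ≤
      c * wnorm (2 * t - s) 1 * wnorm (2 * t - s') 1 * wnorm s ψ := by
  obtain ⟨hint, hCS⟩ := integral_weight_mul_norm_le hts hψ
  calc wnorm (-s') (fun x => ∫ y, K x y * ψ y)
      ≤ c * (wnorm (2 * t - s) 1 * wnorm s ψ) * wnorm (2 * t - s') 1 := by
        refine wnorm_le_of_norm_le hts'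
          (mul_nonneg hc (mul_nonneg (wnorm_nonneg _ _) (wnorm_nonneg _ _))) fun x => ?_
        calc ‖∫ y, K x y * ψ y‖
            ≤ ∫ y, c * (1 + x ^ 2) ^ t * ((1 + y ^ 2) ^ t * ‖ψ y‖) := by
              refine norm_integral_le_of_norm_le (hint.const_mul _) (Eventually.of_forall ?_)
              intro y
              rw [norm_mul, ← mul_assoc, mul_assoc c]
              gcongr
              exact hK x y
          _ = c * (1 + x ^ 2) ^ t * ∫ y, (1 + y ^ 2) ^ t * ‖ψ y‖ := integral_const_mul _ _
          _ ≤ c * (1 + x ^ 2) ^ t * (wnorm (2 * t - s) 1 * wnorm s ψ) := by gcongr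
          _ = c * (wnorm (2 * t - s) 1 * wnorm s ψ) * (1 + x ^ 2) ^ t := by ring
    _ = c * wnorm (2 * t - s) 1 * wnorm (2 * t - s') 1 * wnorm s ψ := by ring

open Complex in
noncomputable def resolventKernel (z : ℂ) (x y : ℝ) : ℂ :=
  -(1 / (2 * I * z ^ ((1 : ℂ) / 2))) * exp (I * z ^ ((1 : ℂ) / 2) * ((|x - y| : ℝ) : ℂ))

open Complex in
noncomputable def resolventDerivKernel (z : ℂ) (x y : ℝ) : ℂ :=
  exp (I * z ^ ((1 : ℂ) / 2) * ((|x - y| : ℝ) : ℂ)) *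
    (1 / (4 * I) * z ^ (-(3 : ℂ) / 2) - ((|x - y| : ℝ) : ℂ) / 4 * z⁻¹)

lemma R0_eq_integral_resolventKernel (z : ℂ) (ψ : ℝ → ℂ) :
    R0 z ψ = fun x => ∫ y, resolventKernel z x y * ψ y := by
  ext x
  simp only [R0, resolventKernel, mul_assoc, integral_const_mul]

lemma norm_resolventKernel_le {z : ℂ} (hz : 0 ≤ z.im) (x y : ℝ) :
    ‖resolventKernel z x y‖ ≤ 1 / 2 * ‖z‖ ^ (-(1 : ℝ) / 2) := by
  have hsqrt : ‖z ^ ((1 : ℂ) / 2)‖ = ‖z‖ ^ ((1 : ℝ) / 2) := by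
    simpa using Complex.norm_cpow_real z (1 / 2)
  rw [resolventKernel, norm_mul]
  refine (mul_le_of_le_one_right (norm_nonneg _)
    (norm_exp_I_mul_cpow_half_mul_le_one hz (abs_nonneg (x - y)))).trans_eq ?_
  rw [norm_neg, norm_div, norm_mul, norm_mul, hsqrt, neg_div, Real.rpow_neg (norm_nonneg z)]
  simp only [norm_one, Complex.norm_I, Complex.norm_ofNat, mul_one]
  ring

lemma norm_resolventDerivKernel_factor_le {z : ℂ} (hz : 1 ≤ ‖z‖) {r : ℝ} (hr : 0 ≤ r) :
    ‖1 / (4 * Complex.I) * z ^ (-(3 : ℂ) / 2) - (r : ℂ) / 4 * z⁻¹‖ ≤ (1 + r) / 4 * ‖z‖⁻¹ := by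
  have hpow : ‖z ^ (-(3 : ℂ) / 2)‖ ≤ ‖z‖⁻¹ := by
    have := Complex.norm_cpow_real z (-3 / 2)
    push_cast at this
    rw [this, ← Real.rpow_neg_one]
    exact Real.rpow_le_rpow_of_exponent_le hz (by norm_num)
  calc _ ≤ ‖1 / (4 * Complex.I) * z ^ (-(3 : ℂ) / 2)‖ + ‖(r : ℂ) / 4 * z⁻¹‖ := norm_sub_le _ _
    _ ≤ 1 / 4 * ‖z‖⁻¹ + r / 4 * ‖z‖⁻¹ := by
        rw [norm_mul, norm_mul, norm_div, norm_div, Complex.norm_real, Real.norm_of_nonneg hr,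
          norm_inv]
        simp only [norm_one, norm_mul, Complex.norm_I, Complex.norm_ofNat, mul_one]
        gcongr
    _ = (1 + r) / 4 * ‖z‖⁻¹ := by ring

lemma norm_resolventDerivKernel_le {z : ℂ} (hz : 0 ≤ z.im) (hz1 : 1 ≤ ‖z‖) (x y : ℝ) :
    ‖resolventDerivKernel z x y‖ ≤
      1 / 2 * ‖z‖⁻¹ * ((1 + x ^ 2) ^ (1 / 2 : ℝ) * (1 + y ^ 2) ^ (1 / 2 : ℝ)) := by
  rw [resolventDerivKernel, norm_mul]
  calc _ ≤ 1 * ((1 + |x - y|) / 4 * ‖z‖⁻¹) :=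
        mul_le_mul (norm_exp_I_mul_cpow_half_mul_le_one hz (abs_nonneg _))
          (norm_resolventDerivKernel_factor_le hz1 (abs_nonneg _)) (norm_nonneg _) zero_le_one
    _ ≤ _ := by
        have := one_add_abs_sub_le_two_mul x y
        rw [one_mul, div_mul_eq_mul_div, div_le_iff₀ (by norm_num)]
        nlinarith [inv_nonneg.2 (norm_nonneg z)]

lemma wnorm_R0_le {s s' : ℝ} (hs : 1 / 2 < s) (hs' : 1 / 2 < s') {z : ℂ} (hz : 0 ≤ z.im)
    {ψ : ℝ → ℂ} (hψ : MemL2s s ψ) :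
    wnorm (-s') (R0 z ψ) ≤
      wnorm (-s) 1 * wnorm (-s') 1 / 2 * ‖z‖ ^ (-(1 : ℝ) / 2) * wnorm s ψ := by
  have h := wnorm_integral_le_of_norm_kernel_le (s := s) (s' := s') (t := 0)
    (K := resolventKernel z) (c := 1 / 2 * ‖z‖ ^ (-(1 : ℝ) / 2)) (by linarith) (by linarith)
    (by positivity) (fun x y => by simpa using norm_resolventKernel_le hz x y) hψ
  rw [R0_eq_integral_resolventKernel]
  refine h.trans_eq ?_
  ring_nf

lemma wnorm_R0'_le {s s' : ℝ} (hs : 3 / 2 < s) (hs' : 3 / 2 < s') {z : ℂ} (hz : 0 ≤ z.im)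
    (hz1 : 1 ≤ ‖z‖) {ψ : ℝ → ℂ} (hψ : MemL2s s ψ) :
    wnorm (-s') (R0' z ψ) ≤ wnorm (1 - s) 1 * wnorm (1 - s') 1 / 2 * ‖z‖⁻¹ * wnorm s ψ := by
  have h := wnorm_integral_le_of_norm_kernel_le (s := s) (s' := s') (t := 1 / 2)
    (by linarith) (by linarith) (by positivity) (norm_resolventDerivKernel_le hz hz1) hψ
  refine h.trans_eq ?_
  ring_nf

/-- Large-energy bounds for the free resolvent and its derivative: for `s, s' > 3/2`
there is `C > 0` such that for every nonzero `z` in the closed upper half-plane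
with `|z| ≥ 1`, `‖R₀(z)ψ‖_{−s'} ≤ C|z|^{−1/2}‖ψ‖_s` and
`‖R₀'(z)ψ‖_{−s'} ≤ C|z|^{−1}‖ψ‖_s`. -/
theorem stmt6 (s s' : ℝ) (hs : s > 3 / 2) (hs' : s' > 3 / 2) :
    ∃ C > (0 : ℝ), ∀ z : ℂ, z ≠ 0 → 0 ≤ z.im → 1 ≤ ‖z‖ →
      ∀ ψ : ℝ → ℂ, MemL2s s ψ →
        wnorm (-s') (R0 z ψ) ≤ C * ‖z‖ ^ (-(1 : ℝ) / 2) * wnorm s ψ ∧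
        wnorm (-s') (R0' z ψ) ≤ C * ‖z‖⁻¹ * wnorm s ψ := by
  set A := wnorm (-s) 1 * wnorm (-s') 1 / 2
  set B := wnorm (1 - s) 1 * wnorm (1 - s') 1 / 2
  refine ⟨max 1 (max A B), lt_max_of_lt_left one_pos, fun z _ hz hz1 ψ hψ => ⟨?_, ?_⟩⟩
  · refine (wnorm_R0_le (by linarith) (by linarith) hz hψ).trans ?_
    gcongr
    · exact wnorm_nonneg s ψ
    · exact le_max_of_le_right (le_max_left A B)
  · refine (wnorm_R0'_le hs hs' hz hz1 hψ).trans ?_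
    gcongr
    · exact wnorm_nonneg s ψ
    · exact le_max_of_le_right (le_max_right A B)
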